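/- Let L ⊂ ℤⁿ be a subgroup of rank ℓ ≥ 1 and let σ₁,…,σₙ ∈ ℤⁿ be vectors such that none of the linear forms x ↦ ⟨x,σⱼ⟩ vanishes identically on L. If the orthogonal projections of σ₁,…,σₙ to L⊗ℝ span a subspace of dimension ℓ, then the series ∑'_{x∈L} 1/(⟨x,σ₁⟩^{e₁}···⟨x,σₙ⟩^{eₙ}) converges absolutely whenever all eⱼ ≥ 2, where the primed sum omits x for which some ⟨x,σⱼ⟩ = 0. -/

import Mathlib

/-!
If `x ∈ L` is orthogonal to every `σⱼ`, then, lying in `V = L ⊗ ℝ`, it is also orthogonal to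
every projection of `σⱼ` onto `V`; these span `V`, so `x = 0`. Hence `x ↦ (⟨x, σⱼ⟩)ⱼ` is
injective on `L`, and since `|yⱼ|^{eⱼ} ≥ yⱼ²` for nonzero integers, the series is dominated
termwise by a subseries of `∑_{y ∈ ℤⁿ} ∏ⱼ 1/yⱼ² = (∑_{m ∈ ℤ} 1/m²)ⁿ`.
-/

open Finset Submodule Set

theorem summable_prod_pi_of_nonneg {ι : Type*} [Fintype ι] {β : ι → Type*}
    {f : ∀ j, β j → ℝ} (hf₀ : ∀ j, 0 ≤ f j) (hf : ∀ j, Summable (f j)) :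
    Summable fun y : ∀ j, β j => ∏ j, f j (y j) := by
  classical
  refine summable_of_sum_le (c := ∏ j, ∑' a, f j a)
    (fun y => prod_nonneg fun j _ => hf₀ j _) fun u => ?_
  calc ∑ y ∈ u, ∏ j, f j (y j)
      ≤ ∑ y ∈ Fintype.piFinset fun j => u.image (· j), ∏ j, f j (y j) :=
        sum_le_sum_of_subset_of_nonneg
          (fun y hy => Fintype.mem_piFinset.2 fun j => mem_image_of_mem _ hy)
          (fun y _ _ => prod_nonneg fun j _ => hf₀ j _)
    _ = ∏ j, ∑ a ∈ u.image (· j), f j a := (prod_univ_sum _ _).symm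
    _ ≤ ∏ j, ∑' a, f j a :=
        prod_le_prod (fun j _ => sum_nonneg fun a _ => hf₀ j a)
          fun j _ => (hf j).sum_le_tsum _ fun a _ => hf₀ j a

section InnerProductSpace

variable {𝕜 E ι : Type*} [RCLike 𝕜] [NormedAddCommGroup E] [InnerProductSpace 𝕜 E]

theorem Submodule.eq_zero_of_inner_eq_zero_of_le_span_orthogonalProjectionOnto
    (K : Submodule 𝕜 E) [K.HasOrthogonalProjection] {s : ι → E}
    (hK : K ≤ span 𝕜 (range fun j => (K.orthogonalProjectionOnto (s j) : E)))
    {x : E} (hx : x ∈ K) (h : ∀ j, inner 𝕜 x (s j) = 0) : x = 0 := by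
  have hspan : span 𝕜 (range fun j => (K.orthogonalProjectionOnto (s j) : E)) ≤ (𝕜 ∙ x)ᗮ := by
    refine span_le.2 ?_
    rintro _ ⟨j, rfl⟩
    rw [SetLike.mem_coe, mem_orthogonal_singleton_iff_inner_right, ← h j]
    exact inner_orthogonalProjectionOnto_eq_of_mem_left (⟨x, hx⟩ : K) (s j)
  exact inner_self_eq_zero.1 (mem_orthogonal_singleton_iff_inner_right.1 (hspan (hK hx)))

end InnerProductSpace

section IntegerLattice

variable {ι κ : Type*}

def intCastEuclidean (ι : Type*) : (ι → ℤ) →ₗ[ℤ] EuclideanSpace ℝ ι where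
  toFun x := WithLp.toLp 2 fun i => (x i : ℝ)
  map_add' x y := by ext; simp
  map_smul' m x := by ext; simp

@[simp]
theorem intCastEuclidean_apply (x : ι → ℤ) (i : ι) : intCastEuclidean ι x i = x i := rfl

theorem intCastEuclidean_injective : Function.Injective (intCastEuclidean ι) :=
  fun x y hxy => funext fun i => by simpa using congrArg (· i) hxy

theorem inner_intCastEuclidean [Fintype ι] (x y : ι → ℤ) :
    inner ℝ (intCastEuclidean ι x) (intCastEuclidean ι y) = ((x ⬝ᵥ y : ℤ) : ℝ) := by
  simp [PiLp.inner_apply, dotProduct, mul_comm]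

theorem intCastEuclidean_mem_span {ℓ : Type*} (B : ℓ → ι → ℤ) {x : ι → ℤ}
    (hx : x ∈ span ℤ (range B)) :
    intCastEuclidean ι x ∈ span ℝ (range fun k => intCastEuclidean ι (B k)) := by
  have hmap : (span ℤ (range B)).map (intCastEuclidean ι) ≤
      (span ℝ (range fun k => intCastEuclidean ι (B k))).restrictScalars ℤ := by
    rw [map_span, ← range_comp]
    exact span_le_restrictScalars ℤ ℝ _
  exact hmap (mem_map_of_mem hx)

theorem injective_dotProduct_of_le_span_orthogonalProjectionOnto [Fintype ι]
    (L : Submodule ℤ (ι → ℤ)) (V : Submodule ℝ (EuclideanSpace ℝ ι))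
    (hLV : ∀ x ∈ L, intCastEuclidean ι x ∈ V) (σ : κ → ι → ℤ)
    (hV : V ≤ span ℝ (range fun j =>
      (V.orthogonalProjectionOnto (intCastEuclidean ι (σ j)) : EuclideanSpace ℝ ι))) :
    Function.Injective fun (x : L) (j : κ) => (x : ι → ℤ) ⬝ᵥ σ j := by
  intro a b hab
  suffices intCastEuclidean ι ((a : ι → ℤ) - b) = 0 from
    Subtype.ext <| sub_eq_zero.1 <| intCastEuclidean_injective <| this.trans (map_zero _).symm
  refine V.eq_zero_of_inner_eq_zero_of_le_span_orthogonalProjectionOnto hV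
    (hLV _ (sub_mem a.2 b.2)) fun j => ?_
  rw [inner_intCastEuclidean, sub_dotProduct]
  exact_mod_cast sub_eq_zero.2 (congrFun hab j)

end IntegerLattice

theorem abs_one_div_prod_pow_le_prod_one_div_sq {κ : Type*} [Fintype κ] (y : κ → ℤ)
    (e : κ → ℕ) (he : ∀ j, 2 ≤ e j) (hy : ∀ j, y j ≠ 0) :
    |1 / ∏ j, (y j : ℝ) ^ e j| ≤ ∏ j, 1 / (y j : ℝ) ^ 2 := by
  rw [one_div, abs_inv, abs_prod, ← prod_inv_distrib]
  refine prod_le_prod (fun j _ => by positivity) fun j _ => ?_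
  rw [abs_pow, one_div, ← sq_abs]
  have h1 : (1 : ℝ) ≤ |(y j : ℝ)| := by rw [← Int.cast_abs]; exact_mod_cast Int.one_le_abs (hy j)
  exact inv_anti₀ (by positivity) (pow_le_pow_right₀ h1 (he j))

theorem stmt13_general (n ℓ : ℕ)
    (B : Fin ℓ → (Fin n → ℤ))
    (L : Submodule ℤ (Fin n → ℤ)) (hL : L = Submodule.span ℤ (Set.range B))
    (σ : Fin n → (Fin n → ℤ))
    (e : Fin n → ℕ) (he : ∀ j, 2 ≤ e j)
    (V : Submodule ℝ (EuclideanSpace ℝ (Fin n)))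
    (hV : V = Submodule.span ℝ
      (Set.range fun k => (WithLp.toLp 2 (fun i => ((B k i : ℝ))) : EuclideanSpace ℝ (Fin n))))
    (hproj : Module.finrank ℝ (Submodule.span ℝ
      (Set.range fun j => ((Submodule.orthogonalProjection V
        (WithLp.toLp 2 (fun i => ((σ j i : ℝ))) : EuclideanSpace ℝ (Fin n)) : V) :
          EuclideanSpace ℝ (Fin n)))) = ℓ) :
    Summable (fun x : L =>
      if ∀ j, (∑ i, (x : Fin n → ℤ) i * σ j i) ≠ 0 then
        |1 / ∏ j, ((∑ i, (x : Fin n → ℤ) i * σ j i : ℤ) : ℝ) ^ (e j)|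
      else 0) := by
  subst hL
  set W := span ℝ (range fun j => (V.orthogonalProjectionOnto
    (WithLp.toLp 2 fun i => (σ j i : ℝ)) : EuclideanSpace ℝ (Fin n)))
  have hWV : W = V := by
    refine eq_of_le_of_finrank_le (span_le.2 ?_) ?_
    · rintro _ ⟨j, rfl⟩
      exact coe_mem _
    · rw [hproj, hV]
      simpa [Set.finrank] using finrank_range_le_card fun k =>
        (WithLp.toLp 2 fun i => (B k i : ℝ) : EuclideanSpace ℝ (Fin n))
  have hinj := injective_dotProduct_of_le_span_orthogonalProjectionOnto _ _
    (fun x hx => hV ▸ intCastEuclidean_mem_span B hx) σ hWV.ge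
  have hdom : Summable fun y : Fin n → ℤ => ∏ j, 1 / (y j : ℝ) ^ 2 :=
    summable_prod_pi_of_nonneg (f := fun _ (m : ℤ) => 1 / (m : ℝ) ^ 2)
      (fun _ m => by positivity) fun _ => Real.summable_one_div_int_pow.2 one_lt_two
  refine (hdom.comp_injective hinj).of_nonneg_of_le (fun x => by positivity) fun x => ?_
  split_ifs with hx
  · exact abs_one_div_prod_pow_le_prod_one_div_sq _ e he hx
  · exact prod_nonneg fun j _ => by positivity

/-- Absolute convergence of generalized Dedekind sums with all exponents `≥ 2`:
if `L ⊆ ℤⁿ` is the lattice spanned by `ℓ ≥ 1` linearly independent vectors,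
none of the linear forms `⟨·, σⱼ⟩` vanishes identically on `L`, and the
orthogonal projections of the `σⱼ` onto `L ⊗ ℝ` span a subspace of dimension
`ℓ`, then `∑'_{x ∈ L} 1/(⟨x,σ₁⟩^{e₁} ⋯ ⟨x,σₙ⟩^{eₙ})`, omitting terms with
vanishing denominator, converges absolutely. -/
theorem stmt13 (n ℓ : ℕ) (hℓ : 1 ≤ ℓ)
    (B : Fin ℓ → (Fin n → ℤ)) (hB : LinearIndependent ℤ B)
    (L : Submodule ℤ (Fin n → ℤ)) (hL : L = Submodule.span ℤ (Set.range B))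
    (σ : Fin n → (Fin n → ℤ))
    (e : Fin n → ℕ) (he : ∀ j, 2 ≤ e j)
    (hnv : ∀ j, ∃ x ∈ L, (∑ i, x i * σ j i) ≠ 0)
    (V : Submodule ℝ (EuclideanSpace ℝ (Fin n)))
    (hV : V = Submodule.span ℝ
      (Set.range fun k => (WithLp.toLp 2 (fun i => ((B k i : ℝ))) : EuclideanSpace ℝ (Fin n))))
    (hproj : Module.finrank ℝ (Submodule.span ℝ
      (Set.range fun j => ((Submodule.orthogonalProjection V
        (WithLp.toLp 2 (fun i => ((σ j i : ℝ))) : EuclideanSpace ℝ (Fin n)) : V) :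
          EuclideanSpace ℝ (Fin n)))) = ℓ) :
    Summable (fun x : L =>
      if ∀ j, (∑ i, (x : Fin n → ℤ) i * σ j i) ≠ 0 then
        |1 / ∏ j, ((∑ i, (x : Fin n → ℤ) i * σ j i : ℤ) : ℝ) ^ (e j)|
      else 0) :=
  stmt13_general n ℓ B L hL σ e he V hV hproj
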